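/- Let λ be a real number with λ > 1. Then √((17λ − 1)/(λ − 1)) is an odd positive integer if and only if there exists a natural number p ≥ 2 such that λ = 1 + 4/(p² + p − 4). Equivalently, with e₃ = √(17λ − 1)/(2√(λ − 1)), the number e₃ is a half-odd integer (i.e. 2e₃ is an odd integer) exactly for λ = 1 + 4/(p² + p − 4), p ∈ ℕ, p ≥ 2. -/

import Mathlib

/-! Since (17λ − 1)/(λ − 1) = 17 + 16/(λ − 1) and (2p + 1)² − 17 = 4(p² + p − 4), the square root
equals 2p + 1 exactly when λ = 1 + 4/(p² + p − 4); for λ > 1 this forces p² + p − 4 > 0, i.e. p ≥ 2.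
The second equivalence is the first one, because 2 · √(17λ − 1)/(2√(λ − 1)) = √((17λ − 1)/(λ − 1)). -/

lemma sqrt_ratio_eq_two_mul_add_one_iff {lam p : ℝ} (hlam : 1 < lam) (hp : 0 ≤ 2 * p + 1) :
    √((17 * lam - 1) / (lam - 1)) = 2 * p + 1 ↔ lam = 1 + 4 / (p ^ 2 + p - 4) := by
  have hlam' : lam - 1 ≠ 0 := by linarith
  rw [Real.sqrt_eq_iff_eq_sq (div_nonneg (by linarith) (by linarith)) hp, div_eq_iff hlam']
  rcases eq_or_ne (p ^ 2 + p - 4) 0 with hD | hD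
  · have hsq : (2 * p + 1) ^ 2 = 17 := by linear_combination 4 * hD
    rw [hD, div_zero, hsq]
    constructor <;> intro h <;> linarith
  · rw [← sub_eq_iff_eq_add', eq_div_iff hD]
    constructor
    · intro h
      linear_combination (-1 / 4 : ℝ) * h
    · intro h
      linear_combination (-4 : ℝ) * h

lemma two_le_of_one_lt_one_add_div {p : ℕ} (h : 1 < 1 + 4 / ((p : ℝ) ^ 2 + p - 4)) : 2 ≤ p := by
  have hD : (0 : ℝ) < (p : ℝ) ^ 2 + p - 4 :=
    (div_pos_iff_of_pos_left (by norm_num : (0 : ℝ) < 4)).1 (by linarith)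
  by_contra! hp
  interval_cases p <;> norm_num at hD

lemma exists_odd_int_eq_iff_exists_odd_nat {x : ℝ} (hx : 0 ≤ x) :
    (∃ m : ℤ, Odd m ∧ x = m) ↔ ∃ n : ℕ, Odd n ∧ x = n := by
  constructor
  · rintro ⟨m, hm, rfl⟩
    lift m to ℕ using (by exact_mod_cast hx)
    exact ⟨m, (Int.odd_coe_nat m).1 hm, rfl⟩
  · rintro ⟨n, hn, rfl⟩
    exact ⟨n, (Int.odd_coe_nat n).2 hn, rfl⟩

theorem kimura_condition_mass_ratio (lam : ℝ) (hlam : 1 < lam) :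
    ((∃ n : ℕ, Odd n ∧ 0 < n ∧ Real.sqrt ((17 * lam - 1) / (lam - 1)) = n) ↔
      (∃ p : ℕ, 2 ≤ p ∧ lam = 1 + 4 / ((p : ℝ) ^ 2 + (p : ℝ) - 4))) ∧
    ((∃ m : ℤ, Odd m ∧
        2 * (Real.sqrt (17 * lam - 1) / (2 * Real.sqrt (lam - 1))) = (m : ℝ)) ↔
      (∃ p : ℕ, 2 ≤ p ∧ lam = 1 + 4 / ((p : ℝ) ^ 2 + (p : ℝ) - 4))) := by
  have sqrt_eq_odd : (∃ n : ℕ, Odd n ∧ 0 < n ∧ √((17 * lam - 1) / (lam - 1)) = n) ↔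
      ∃ p : ℕ, 2 ≤ p ∧ lam = 1 + 4 / ((p : ℝ) ^ 2 + p - 4) := by
    constructor
    · rintro ⟨_, ⟨p, rfl⟩, -, h⟩
      push_cast at h
      have hlam_eq := (sqrt_ratio_eq_two_mul_add_one_iff hlam (by positivity)).1 h
      exact ⟨p, two_le_of_one_lt_one_add_div (hlam_eq ▸ hlam), hlam_eq⟩
    · rintro ⟨p, -, hlam_eq⟩
      refine ⟨2 * p + 1, odd_two_mul_add_one p, by omega, ?_⟩
      push_cast
      exact (sqrt_ratio_eq_two_mul_add_one_iff hlam (by positivity)).2 hlam_eq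
  have two_mul_e₃ : 2 * (√(17 * lam - 1) / (2 * √(lam - 1))) = √((17 * lam - 1) / (lam - 1)) := by
    rw [Real.sqrt_div (by linarith)]
    ring
  refine ⟨sqrt_eq_odd, ?_⟩
  rw [two_mul_e₃, exists_odd_int_eq_iff_exists_odd_nat (Real.sqrt_nonneg _), ← sqrt_eq_odd]
  exact exists_congr fun n => and_congr_right fun hn => (and_iff_right hn.pos).symm
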